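/- arXiv:1501.01739 — 5 statements merged into one kernel-verified Lean document; each statement's English description precedes it below -/
import Mathlib

section
/- Any replete reflective subcategory of a category with biproducts itself has biproducts; explicitly, if G : A → C is the full inclusion with left adjoint F and C has biproducts ⊕, then for objects X, Y of A, the object F(G(X) ⊕ G(Y)) is simultaneously a coproduct and a product of X and Y in A. -/
/-!
Let `W = G X ⊞ G Y` and `η` the unit. The map `⟨G (ε_X ∘ F π₁), G (ε_Y ∘ F π₂)⟩ : G F W ⟶ W` is a
retraction of `η_W`, and it is also a section, because maps `G F W ⟶ G Z` are determined by their
precomposite with `η_W`. So `η_W` is an isomorphism, and through it the images under `G` of the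
given cofan and fan are the biproduct cocone and cone of `G X`, `G Y`. A fully faithful functor
reflects (co)limits.
-/

open CategoryTheory CategoryTheory.Limits

namespace CategoryTheory.Adjunction

variable {C A : Type*} [Category C] [Category A] {F : C ⥤ A} {G : A ⥤ C} (adj : F ⊣ G)

lemma unit_comp_map_homEquiv_symm {W : C} {X : A} (f : W ⟶ G.obj X) :
    adj.unit.app W ≫ G.map ((adj.homEquiv W X).symm f) = f :=
  (adj.homEquiv_unit _ _ _).symm.trans (Equiv.apply_symm_apply _ f)

lemma map_homEquiv_symm_eq_inv_unit_comp {W : C} [IsIso (adj.unit.app W)] {X : A}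
    (f : W ⟶ G.obj X) : G.map ((adj.homEquiv W X).symm f) = inv (adj.unit.app W) ≫ f := by
  rw [IsIso.eq_inv_comp, unit_comp_map_homEquiv_symm]

lemma eq_of_unit_app_comp_eq [G.Full] {W : C} {Z : A} {f g : G.obj (F.obj W) ⟶ G.obj Z}
    (h : adj.unit.app W ≫ f = adj.unit.app W ≫ g) : f = g := by
  obtain ⟨f, rfl⟩ := G.map_surjective f
  obtain ⟨g, rfl⟩ := G.map_surjective g
  exact congrArg G.map ((adj.homEquiv W Z).injective (by simpa only [adj.homEquiv_unit] using h))

lemma isIso_unit_app_of_retraction [G.Full] {W : C} (r : G.obj (F.obj W) ⟶ W)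
    (hr : adj.unit.app W ≫ r = 𝟙 W) : IsIso (adj.unit.app W) :=
  ⟨r, hr, adj.eq_of_unit_app_comp_eq (by rw [reassoc_of% hr, Category.comp_id])⟩

lemma isIso_unit_app_biprod [G.Full] [HasZeroMorphisms C] (X Y : A)
    [HasBinaryBiproduct (G.obj X) (G.obj Y)] :
    IsIso (adj.unit.app (G.obj X ⊞ G.obj Y)) :=
  adj.isIso_unit_app_of_retraction
    (biprod.lift (G.map ((adj.homEquiv _ X).symm biprod.fst))
      (G.map ((adj.homEquiv _ Y).symm biprod.snd)))
    (by ext <;> simp [unit_comp_map_homEquiv_symm])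

end CategoryTheory.Adjunction

/-- A replete reflective subcategory of a category with biproducts has biproducts: if
`G : A ⥤ C` is the fully faithful inclusion with left adjoint `F` and `C` has biproducts, then
for `X Y : A` the object `F(G X ⊞ G Y)` is simultaneously a coproduct and a product
of `X` and `Y` in `A`. -/
theorem reflective_subcategory_has_biproducts
    {C : Type*} [Category C] {A : Type*} [Category A]
    [HasZeroMorphisms C] [HasBinaryBiproducts C]
    (G : A ⥤ C) [G.Full] [G.Faithful] (F : C ⥤ A) (adj : F ⊣ G) (X Y : A) :
    Nonempty (IsColimit (BinaryCofan.mk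
        (G.preimage (biprod.inl ≫ adj.unit.app (G.obj X ⊞ G.obj Y)))
        (G.preimage (biprod.inr ≫ adj.unit.app (G.obj X ⊞ G.obj Y))))) ∧
    Nonempty (IsLimit (BinaryFan.mk
        ((adj.homEquiv (G.obj X ⊞ G.obj Y) X).symm biprod.fst)
        ((adj.homEquiv (G.obj X ⊞ G.obj Y) Y).symm biprod.snd))) := by
  have := adj.isIso_unit_app_biprod X Y
  let η := asIso (adj.unit.app (G.obj X ⊞ G.obj Y))
  constructor
  · refine ⟨isColimitOfReflects G ((isColimitMapCoconeBinaryCofanEquiv G _ _).symm ?_)⟩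
    simp only [Functor.map_preimage]
    exact (BinaryBiproduct.isColimit _ _).ofIsoColimit (BinaryCofan.ext η rfl rfl)
  · refine ⟨isLimitOfReflects G ((isLimitMapConeBinaryFanEquiv G _ _).symm ?_)⟩
    simp only [adj.map_homEquiv_symm_eq_inv_unit_comp]
    exact (BinaryBiproduct.isLimit _ _).ofIsoLimit
      (BinaryFan.ext η (by simp [η]) (by simp [η]))
end

section
/- Let A be a replete reflective subcategory of a weakly Krull–Schmidt category C with biproduct ⊕, and suppose X ≅ Y ⊕ Z in C. Then X lies in A if and only if both Y and Z lie in A. -/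
open CategoryTheory CategoryTheory.Limits

/-- An object is indecomposable if whenever it is isomorphic to a biproduct of two objects,
one of the two summands is zero. -/
def IsIndecomposableObj {C : Type*} [Category C] [HasZeroMorphisms C]
    [HasBinaryBiproducts C] (X : C) : Prop :=
  ∀ (Y Z : C), Nonempty (X ≅ Y ⊞ Z) → (IsZero Y ∨ IsZero Z)

/-- A category with biproducts is weakly Krull–Schmidt if every object decomposes as a finite
biproduct of indecomposables, uniquely up to permutation of the summands. -/
def WeaklyKrullSchmidt (C : Type*) [Category C] [HasZeroMorphisms C]
    [HasBinaryBiproducts C] [HasFiniteBiproducts C] : Prop :=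
  (∀ X : C, ∃ (n : ℕ) (f : Fin n → C), (∀ i, IsIndecomposableObj (f i)) ∧
      Nonempty (X ≅ ⨁ f)) ∧
  (∀ (X : C) (n m : ℕ) (f : Fin n → C) (g : Fin m → C),
      (∀ i, IsIndecomposableObj (f i)) → (∀ j, IsIndecomposableObj (g j)) →
      Nonempty (X ≅ ⨁ f) → Nonempty (X ≅ ⨁ g) →
      ∃ σ : Fin n ≃ Fin m, ∀ i, Nonempty (f i ≅ g (σ i)))

/-!
An object lies in a replete reflective subcategory exactly when its unit is an isomorphism.
The unit at a retract of `X` is a retract of the unit at `X` in the arrow category, and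
isomorphisms are stable under retracts, so the subcategory is closed under retracts, in particular
under biproduct summands. Conversely, the inclusion is a fully faithful right adjoint, so the
subcategory is closed under every limit that exists in the ambient category, and `Y ⊞ Z` is a
binary product.
-/

namespace CategoryTheory.ObjectProperty

variable {C : Type*} [Category C] (P : ObjectProperty C) [P.IsClosedUnderIsomorphisms]

lemma essImage_ι : P.ι.essImage = P := by
  ext X
  exact ⟨fun ⟨A, ⟨e⟩⟩ ↦ P.prop_of_iso e A.property, fun hX ↦ ⟨⟨X, hX⟩, ⟨Iso.refl X⟩⟩⟩

variable [P.ι.IsRightAdjoint]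

lemma prop_iff_isIso_unit_app (X : C) :
    P X ↔ IsIso ((Adjunction.ofIsRightAdjoint P.ι).unit.app X) := by
  rw [Adjunction.isIso_unit_app_iff_mem_essImage, essImage_ι]

instance isStableUnderRetracts_of_isRightAdjoint_ι : P.IsStableUnderRetracts where
  of_retract h hX := by
    rw [P.prop_iff_isIso_unit_app] at hX ⊢
    exact (MorphismProperty.isomorphisms C).of_retract
      (NatTrans.retractArrowApp (Adjunction.ofIsRightAdjoint P.ι).unit h) hX

instance isClosedUnderLimitsOfShape_of_isRightAdjoint_ι (J : Type*) [Category J]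
    [HasLimitsOfShape J C] : P.IsClosedUnderLimitsOfShape J :=
  have : Reflective P.ι := { L := P.ι.leftAdjoint, adj := .ofIsRightAdjoint P.ι }
  have := hasLimitsOfShape_of_reflective (J := J) P.ι
  isClosedUnderLimitsOfShape_of_preservesLimitsOfShape_ι P J

end CategoryTheory.ObjectProperty

open ObjectProperty in
theorem mem_replete_reflective_iff_summands_mem_general
    {C : Type*} [Category C] [HasZeroMorphisms C] [HasBinaryBiproducts C]
    (P : C → Prop) (hrep : ∀ {X Y : C}, (X ≅ Y) → P X → P Y)
    [(ObjectProperty.ι P).IsRightAdjoint]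
    (X Y Z : C) (e : X ≅ Y ⊞ Z) :
    P X ↔ (P Y ∧ P Z) := by
  have : IsClosedUnderIsomorphisms P := ⟨hrep⟩
  rw [prop_iff_of_iso P e]
  exact ⟨fun h ↦ ⟨IsStableUnderRetracts.of_biprod_left P h,
      IsStableUnderRetracts.of_biprod_right P h⟩,
    fun ⟨hY, hZ⟩ ↦ prop_of_isLimit_binaryFan P (BinaryBiproduct.isLimit Y Z) hY hZ⟩

/-- Let `A` be a replete reflective subcategory (given by an isomorphism-closed predicate `P`
whose full-subcategory inclusion has a left adjoint) of a weakly Krull–Schmidt category `C`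
with biproducts, and suppose `X ≅ Y ⊞ Z`. Then `X` lies in `A` iff both `Y` and `Z` do. -/
theorem mem_replete_reflective_iff_summands_mem
    {C : Type*} [Category C] [HasZeroMorphisms C] [HasBinaryBiproducts C] [HasFiniteBiproducts C]
    (hKS : WeaklyKrullSchmidt C)
    (P : C → Prop) (hrep : ∀ {X Y : C}, (X ≅ Y) → P X → P Y)
    [(ObjectProperty.ι P).IsRightAdjoint]
    (X Y Z : C) (e : X ≅ Y ⊞ Z) :
    P X ↔ (P Y ∧ P Z) :=
  mem_replete_reflective_iff_summands_mem_general P hrep X Y Z e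
end

section
/- Let T be a coequalizable monad on C whose Eilenberg–Moore forgetful functor G : C^T → C is absolutely monadic. Then for every homological presentation (D, F', G') of T, the comparison functor K : D → C^T is an equivalence of categories; in other words, T is uniquely homologically presentable. -/
open CategoryTheory CategoryTheory.Limits

/-!
The homological condition says that every `Y : D` is the coequalizer of `ε_{F'G'Y}` and
`F'G'ε_Y`, so a map out of `Y` is a map out of `F'G'Y` coequalizing this pair; by adjunction these
are exactly the algebra maps out of `K Y`, hence `K` is fully faithful. Given an algebra `X`,
absolute monadicity splits its Beck pair of free algebras, which is the image under `K` of the pair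
`F'X.a, ε_{F'X.A}`. Since `K` is fully faithful the splitting lifts to the coequalizer `P` of that
pair in `D`; being split, this coequalizer is preserved by `K`, so `K P ≅ X`.
-/

namespace CategoryTheory

variable {C D E : Type*} [Category C] [Category D] [Category E]

theorem Limits.hasCoequalizer_symm {X Y : C} {f g : X ⟶ Y} (h : HasCoequalizer f g) :
    HasCoequalizer g f :=
  HasColimit.mk
    { cocone := Cofork.ofπ (coequalizer.π f g) (coequalizer.condition f g).symm
      isColimit := Cofork.IsColimit.mk _
        (fun s => coequalizer.desc s.π s.condition.symm)
        (fun s => coequalizer.π_desc _ _)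
        (fun s m hm => coequalizer.hom_ext (f := f) (g := g) (by rwa [coequalizer.π_desc])) }

def Functor.FullyFaithful.isSplitCoequalizerOfMap {K : D ⥤ E}
    (hK : K.FullyFaithful) {X Y : D} {f g : X ⟶ Y} {c : Cofork f g} (hc : IsColimit c)
    {Z : E} {ρ : K.obj Y ⟶ Z} (s : IsSplitCoequalizer (K.map f) (K.map g) ρ) :
    IsSplitCoequalizer f g c.π :=
  -- the idempotent `ρ ≫ s.rightSection` lifts to `Y` and then factors through `c`
  let e := hK.preimage (ρ ≫ s.rightSection)
  have he : f ≫ e = g ≫ e :=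
    hK.map_injective (by simpa [e] using s.condition_assoc s.rightSection)
  have hte : hK.preimage s.leftSection ≫ f = e := hK.map_injective (by simp [e])
  have htg : hK.preimage s.leftSection ≫ g = 𝟙 Y := hK.map_injective (by simp)
  { rightSection := Cofork.IsColimit.desc hc e he
    leftSection := hK.preimage s.leftSection
    condition := c.condition
    rightSection_π := Cofork.IsColimit.hom_ext hc (by
      rw [Cofork.IsColimit.π_desc'_assoc, Category.comp_id, ← hte, Category.assoc, c.condition,
        reassoc_of% htg])
    leftSection_bottom := htg
    leftSection_top := by rw [hte]; exact (Cofork.IsColimit.π_desc' hc e he).symm }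

variable {F : C ⥤ D} {G : D ⥤ C} (adj : F ⊣ G)

theorem Adjunction.counit_comp_homEquiv_symm_eq {A : C} {B : D} (a : G.obj (F.obj A) ⟶ A)
    (g : A ⟶ G.obj B) (hg : G.map (F.map g) ≫ G.map (adj.counit.app B) = a ≫ g) :
    adj.counit.app (F.obj A) ≫ (adj.homEquiv A B).symm g =
      F.map a ≫ (adj.homEquiv A B).symm g := by
  rw [Adjunction.homEquiv_counit, ← adj.counit_naturality_assoc (F.map g), ← F.map_comp_assoc a,
    ← hg, F.map_comp_assoc, adj.counit_naturality]

theorem Adjunction.map_eq_of_counit_comp_eq {Y B : D} {d : Y ⟶ B} {g : G.obj Y ⟶ G.obj B}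
    (hd : adj.counit.app Y ≫ d = (adj.homEquiv _ _).symm g) : G.map d = g :=
  (adj.homEquiv _ _).symm.injective <| by
    rw [← hd, Adjunction.homEquiv_counit, adj.counit_naturality]

def Adjunction.counitCofork (Y : D) :
    Cofork (adj.counit.app (F.obj (G.obj Y))) (F.map (G.map (adj.counit.app Y))) :=
  Cofork.ofπ (adj.counit.app Y) (adj.counit_naturality _).symm

namespace Monad

def comparisonFullyFaithful (h : ∀ Y, IsColimit (adj.counitCofork Y)) :
    (comparison adj).FullyFaithful where
  preimage {Y₁ _} φ := Cofork.IsColimit.desc (h Y₁) ((adj.homEquiv _ _).symm φ.f)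
    (adj.counit_comp_homEquiv_symm_eq _ φ.f φ.h)
  map_preimage φ :=
    Algebra.Hom.ext (adj.map_eq_of_counit_comp_eq (Cofork.IsColimit.π_desc' (h _) _ _))
  preimage_map {Y₁ _} m := by
    apply Cofork.IsColimit.hom_ext (h Y₁)
    refine (Cofork.IsColimit.π_desc' _ _ _).trans ?_
    exact (adj.homEquiv_counit _ _ _).trans (adj.counit_naturality m)

theorem essSurj_comparison (hK : (comparison adj).FullyFaithful)
    [∀ X : adj.toMonad.Algebra, HasCoequalizer (F.map X.a) (adj.counit.app (F.obj X.A))]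
    (hsplit : ∀ X : adj.toMonad.Algebra,
      HasSplitCoequalizer (FreeCoequalizer.topMap X) (FreeCoequalizer.bottomMap X)) :
    (comparison adj).EssSurj where
  mem_essImage X := by
    obtain ⟨_, _, ⟨s⟩⟩ := (hsplit X).splittable
    let sD := hK.isSplitCoequalizerOfMap
      (coequalizerIsCoequalizer (F.map X.a) (adj.counit.app (F.obj X.A))) s
    -- `comparison adj` sends the pair `F.map X.a, ε_{F X.A}` to the Beck pair of free algebras
    exact ⟨_, ⟨(sD.map (comparison adj)).isCoequalizer.coconePointUniqueUpToIso
      (beckAlgebraCoequalizer X)⟩⟩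

end Monad

end CategoryTheory

/-- If `T` is a coequalizable monad whose Eilenberg–Moore forgetful functor is absolutely
monadic, then for every homological presentation `(D, F', G')` of `T` the comparison functor
`K : D ⥤ C^T` is an equivalence: `T` is uniquely homologically presentable. -/
theorem uniquely_homologically_presentable_of_absolutely_monadic
    {C : Type*} [Category C] (T : Monad C)
    -- absolute monadicity of the forgetful functor `G : C^T ⥤ C`:
    (habs : ∀ {A B : T.Algebra} (f g : A ⟶ B),
      (∃ (Z : C) (π : T.forget.obj B ⟶ Z),
          Nonempty (IsSplitCoequalizer (T.forget.map f) (T.forget.map g) π)) →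
        (∃ (W : T.Algebra) (ρ : B ⟶ W), Nonempty (IsSplitCoequalizer f g ρ)) ∧
        Nonempty (PreservesColimit (parallelPair f g) T.forget) ∧
        Nonempty (ReflectsColimit (parallelPair f g) T.forget))
    -- a homological presentation `(D, F', G')` of `T`:
    {D : Type*} [Category D] (F' : C ⥤ D) (G' : D ⥤ C) (adj : F' ⊣ G')
    (hT : adj.toMonad = T)
    (hcoeq : ∀ X : adj.toMonad.Algebra,
      HasCoequalizer (adj.counit.app (F'.obj X.A)) (F'.map X.a))
    (hiso : ∀ Y : D,
      haveI : HasCoequalizer (adj.counit.app (F'.obj (G'.obj Y)))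
          (F'.map (G'.map (adj.counit.app Y))) := hcoeq ((Monad.comparison adj).obj Y)
      IsIso (coequalizer.desc
        (f := adj.counit.app (F'.obj (G'.obj Y)))
        (g := F'.map (G'.map (adj.counit.app Y)))
        (adj.counit.app Y) (by simp))) :
    (Monad.comparison adj).IsEquivalence := by
  subst hT
  have hK := Monad.comparisonFullyFaithful adj fun Y =>
    letI : HasCoequalizer (adj.counit.app (F'.obj (G'.obj Y)))
      (F'.map (G'.map (adj.counit.app Y))) := hcoeq ((Monad.comparison adj).obj Y)
    IsColimit.ofPointIso (colimit.isColimit _) (i := hiso Y)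
  have : ∀ X : adj.toMonad.Algebra, HasCoequalizer (F'.map X.a) (adj.counit.app (F'.obj X.A)) :=
    fun X => hasCoequalizer_symm (hcoeq X)
  have := Monad.essSurj_comparison adj hK fun X =>
    ⟨(habs (Monad.FreeCoequalizer.topMap X) (Monad.FreeCoequalizer.bottomMap X)
      ⟨X.A, X.a, ⟨Monad.beckSplitCoequalizer X⟩⟩).1⟩
  exact { full := hK.full, faithful := hK.faithful }
end

section
/- Let A be a Dedekind domain, 𝔪 a maximal ideal, and n ≥ i ≥ 1 integers. Then A/𝔪^i is isomorphic to the kernel of an A-module endomorphism of A/𝔪ⁿ. Consequently, any replete reflective subcategory of the category of finitely generated A-modules containing A/𝔪ⁿ also contains A/𝔪^i. -/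
/-!
Pick `x ∈ 𝔪 ^ i \ 𝔪 ^ (i + 1)` and `y ∈ 𝔪 ^ (n - i) \ 𝔪 ^ (n - i + 1)`. By unique factorisation
of ideals, `(x) + 𝔪 ^ n = 𝔪 ^ i`, hence `z * x ∈ 𝔪 ^ n ↔ z ∈ 𝔪 ^ (n - i)`. So multiplication by
`x` on `A ⧸ 𝔪 ^ n` has kernel `𝔪 ^ (n - i) ⧸ 𝔪 ^ n`, onto which `a ↦ a * y` maps `A` with kernel
`𝔪 ^ i`.

The inclusion of a replete reflective subcategory is monadic, so it creates limits and the
subcategory is closed under them; finitely generated modules over a noetherian ring have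
kernels, computed as in all modules.
-/

open CategoryTheory Limits

namespace Ideal

variable {A : Type*} [CommRing A] [IsDedekindDomain A] {𝔪 : Ideal A} {x : A} {k n : ℕ}

theorem span_singleton_sup_pow_eq_pow (hm : 𝔪.IsMaximal) (hbot : 𝔪 ≠ ⊥)
    (hx : x ∈ 𝔪 ^ k) (hx' : x ∉ 𝔪 ^ (k + 1)) (hkn : k ≤ n) :
    span {x} ⊔ 𝔪 ^ n = 𝔪 ^ k := by
  refine le_antisymm (sup_le ((span_singleton_le_iff_mem _).mpr hx) (pow_le_pow_right hkn)) ?_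
  obtain ⟨j, -, hj⟩ := (dvd_prime_pow (prime_of_isPrime hbot hm.isPrime) n).mp
    (dvd_iff_le.mpr (le_sup_right : 𝔪 ^ n ≤ span {x} ⊔ 𝔪 ^ n))
  rw [associated_iff_eq.mp hj]
  have hxj : x ∈ 𝔪 ^ j := associated_iff_eq.mp hj ▸ mem_sup_left (mem_span_singleton_self x)
  have hjk : j ≤ k := by
    by_contra! h
    exact hx' (pow_le_pow_right h hxj)
  exact pow_le_pow_right hjk

theorem mul_mem_pow_iff_mem_pow_sub (hm : 𝔪.IsMaximal) (hbot : 𝔪 ≠ ⊥)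
    (hx : x ∈ 𝔪 ^ k) (hx' : x ∉ 𝔪 ^ (k + 1)) (hkn : k ≤ n) {z : A} :
    z * x ∈ 𝔪 ^ n ↔ z ∈ 𝔪 ^ (n - k) := by
  refine ⟨fun hz => ?_, fun hz => ?_⟩
  · have hle : span {z} * 𝔪 ^ k ≤ 𝔪 ^ n := by
      rw [← span_singleton_sup_pow_eq_pow hm hbot hx hx' hkn, mul_sup,
        span_singleton_mul_span_singleton]
      exact sup_le ((span_singleton_le_iff_mem _).mpr hz) mul_le_right
    rw [← dvd_span_singleton, ← mul_dvd_mul_iff_right (pow_ne_zero k hbot), ← pow_add,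
      Nat.sub_add_cancel hkn]
    exact dvd_iff_le.mpr hle
  · simpa [← pow_add, Nat.sub_add_cancel hkn] using mul_mem_mul hz hx

variable {i : ℕ}

theorem nonempty_quotient_pow_equiv_ker_smul (hm : 𝔪.IsMaximal) (hbot : 𝔪 ≠ ⊥)
    (hx : x ∈ 𝔪 ^ i) (hx' : x ∉ 𝔪 ^ (i + 1)) (hin : i ≤ n) :
    Nonempty ((A ⧸ 𝔪 ^ i) ≃ₗ[A] LinearMap.ker (x • LinearMap.id : (A ⧸ 𝔪 ^ n) →ₗ[A] _)) := by
  obtain ⟨y, hy, hy'⟩ := exists_mem_pow_notMem_pow_succ 𝔪 hbot hm.ne_top (n - i)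
  let ψ : A →ₗ[A] A ⧸ 𝔪 ^ n := y • (𝔪 ^ n).mkQ
  have hψ (a : A) : ψ a = Quotient.mk _ (a * y) := by
    rw [mul_comm]; rfl
  have hφ (a : A) :
      (x • LinearMap.id : (A ⧸ 𝔪 ^ n) →ₗ[A] _) (Quotient.mk _ a) = Quotient.mk _ (a * x) := by
    rw [mul_comm]; rfl
  have hyx : y * x ∈ 𝔪 ^ n := by
    simpa [← pow_add, Nat.sub_add_cancel hin] using mul_mem_mul hy hx
  have hker : LinearMap.ker ψ = 𝔪 ^ i := by
    ext a
    rw [LinearMap.mem_ker, hψ, Quotient.eq_zero_iff_mem,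
      mul_mem_pow_iff_mem_pow_sub hm hbot hy hy' (n.sub_le i), Nat.sub_sub_self hin]
  have hrange : LinearMap.range ψ = LinearMap.ker (x • LinearMap.id) := by
    ext z
    obtain ⟨z, rfl⟩ := Quotient.mk_surjective z
    rw [LinearMap.mem_ker, hφ, Quotient.eq_zero_iff_mem]
    constructor
    · rintro ⟨a, ha⟩
      rw [hψ, Quotient.eq] at ha
      convert sub_mem (mul_mem_left _ a hyx) (mul_mem_right x _ ha) using 1
      ring
    · rw [mul_mem_pow_iff_mem_pow_sub hm hbot hx hx' hin,
        ← span_singleton_sup_pow_eq_pow hm hbot hy hy' (n.sub_le i)]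
      intro hz
      obtain ⟨_, hs, t, ht, rfl⟩ := Submodule.mem_sup.mp hz
      obtain ⟨a, rfl⟩ := mem_span_singleton'.mp hs
      exact ⟨a, by rw [hψ, map_add, Quotient.eq_zero_iff_mem.mpr ht, add_zero]⟩
  exact ⟨(Submodule.quotEquivOfEq _ _ hker.symm).trans
    (ψ.quotKerEquivRange.trans (LinearEquiv.ofEq _ _ hrange))⟩

theorem exists_quotient_pow_equiv_ker (hm : 𝔪.IsMaximal) (hi : 1 ≤ i) (hin : i ≤ n) :
    ∃ φ : (A ⧸ 𝔪 ^ n) →ₗ[A] (A ⧸ 𝔪 ^ n), Nonempty ((A ⧸ 𝔪 ^ i) ≃ₗ[A] LinearMap.ker φ) := by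
  by_cases hbot : 𝔪 = ⊥
  · have hpow : 𝔪 ^ i = 𝔪 ^ n := by
      rw [hbot, ← zero_eq_bot, zero_pow (by omega), zero_pow (by omega)]
    exact ⟨0, ⟨(Submodule.quotEquivOfEq _ _ hpow).trans
      (LinearEquiv.ofTop _ LinearMap.ker_zero).symm⟩⟩
  · obtain ⟨x, hx, hx'⟩ := exists_mem_pow_notMem_pow_succ 𝔪 hbot hm.ne_top i
    exact ⟨_, nonempty_quotient_pow_equiv_ker_smul hm hbot hx hx' hin⟩

end Ideal

namespace CategoryTheory.ObjectProperty

variable {C : Type*} [Category* C] (P : ObjectProperty C)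

instance isClosedUnderLimitsOfShape_of_isRightAdjoint [P.IsClosedUnderIsomorphisms]
    [P.ι.IsRightAdjoint] (J : Type*) [Category* J] : P.IsClosedUnderLimitsOfShape J where
  limitsOfShape_le := by
    rintro X ⟨h⟩
    let _ : Reflective P.ι := { L := P.ι.leftAdjoint, adj := Adjunction.ofIsRightAdjoint _ }
    let _ := monadicCreatesLimits P.ι
    let c : Cone (P.lift h.diag h.prop_diag_obj ⋙ P.ι) := h.cone
    have hc : IsLimit c := h.isLimit
    exact P.prop_of_iso ((Cone.forget _).mapIso (liftedLimitMapsToOriginal hc))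
      (liftLimit hc).pt.property

end CategoryTheory.ObjectProperty

namespace FGModuleCat

variable {R : Type*} [CommRing R] [IsNoetherianRing R] {M N : FGModuleCat R}

noncomputable def kernelIsLimit (f : M ⟶ N) :
    IsLimit (KernelFork.ofι (f := f) (ofHom (LinearMap.ker f.hom.hom).subtype)
      (by ext x; exact x.2)) :=
  isLimitOfReflects (forget₂ (FGModuleCat R) (ModuleCat R))
    ((KernelFork.isLimitMapConeEquiv _ _).symm (ModuleCat.kernelIsLimit _))

end FGModuleCat

/-- For a Dedekind domain `A`, a maximal ideal `𝔪` and `1 ≤ i ≤ n`, the module `A ⧸ 𝔪^i` is the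
kernel of an endomorphism of `A ⧸ 𝔪^n`; consequently any replete reflective subcategory of the
category of finitely generated `A`-modules containing `A ⧸ 𝔪^n` also contains `A ⧸ 𝔪^i`. -/
theorem quotient_power_kernel_and_reflective_subcategory
    (A : Type) [CommRing A] [IsDedekindDomain A]
    (𝔪 : Ideal A) (hm : 𝔪.IsMaximal) (i n : ℕ) (hi : 1 ≤ i) (hin : i ≤ n)
    (P : FGModuleCat A → Prop)
    (hrep : ∀ {X Y : FGModuleCat A}, (X ≅ Y) → P X → P Y)
    [(ObjectProperty.ι P).IsRightAdjoint]
    (hPn : P (FGModuleCat.of A (A ⧸ (𝔪 ^ n)))) :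
    (∃ φ : (A ⧸ (𝔪 ^ n)) →ₗ[A] (A ⧸ (𝔪 ^ n)),
        Nonempty ((A ⧸ (𝔪 ^ i)) ≃ₗ[A] LinearMap.ker φ)) ∧
      P (FGModuleCat.of A (A ⧸ (𝔪 ^ i))) := by
  obtain ⟨φ, ⟨e⟩⟩ := Ideal.exists_quotient_pow_equiv_ker hm hi hin
  have : ObjectProperty.IsClosedUnderIsomorphisms P := ⟨hrep⟩
  have hker : P (FGModuleCat.of A (LinearMap.ker φ)) :=
    ObjectProperty.prop_of_isLimit P (FGModuleCat.kernelIsLimit (FGModuleCat.ofHom φ))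
      (by rintro (_ | _) <;> exact hPn)
  exact ⟨⟨φ, ⟨e⟩⟩, hrep e.toFGModuleCatIso.symm hker⟩
end

section
/- Let T be a coequalizable monad on C and suppose the forgetful functor G : C^T → C preserves filtered colimits. If (D, F', G') is a finitary presentation of T (i.e., G' preserves all filtered colimits existing in D), then the comparison functor K : D → C^T preserves filtered colimits. -/
open CategoryTheory CategoryTheory.Limits

/-- Let `T` be a coequalizable monad whose forgetful functor `G : C^T ⥤ C` preserves filtered
colimits. If `(D, F', G')` is a finitary presentation of `T` (i.e. `G'` preserves filtered
colimits), then the comparison functor `K : D ⥤ C^T` preserves filtered colimits. -/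
theorem comparison_preserves_filtered_colimits_of_finitary
    {C : Type*} [Category C] (T : Monad C) [HasCoequalizers T.Algebra]
    [PreservesFilteredColimits T.forget]
    {D : Type*} [Category D] (F' : C ⥤ D) (G' : D ⥤ C) (adj : F' ⊣ G')
    (hT : adj.toMonad = T)
    [PreservesFilteredColimits G'] :
    Nonempty (PreservesFilteredColimits (Monad.comparison adj)) := by
  subst hT
  constructor
  constructor
  intro J _ _
  haveI : PreservesColimitsOfShape J (Monad.forget adj.toMonad) :=
    inferInstance
  haveI : CreatesColimitsOfShape J (Monad.forget adj.toMonad) :=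
    monadicCreatesColimitsOfShapeOfPreservesColimitsOfShape _
  haveI : ReflectsColimitsOfShape J (Monad.forget adj.toMonad) := inferInstance
  haveI : PreservesColimitsOfShape J (Monad.comparison adj ⋙ Monad.forget adj.toMonad) :=
    preservesColimitsOfShape_of_natIso (Monad.comparisonForget adj).symm
  exact preservesColimitsOfShape_of_reflects_of_preserves
    (Monad.comparison adj) (Monad.forget adj.toMonad)
end
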